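/- arXiv:2404.09741 — 3 statements merged into one kernel-verified Lean document; each statement's English description precedes it below -/
import Mathlib

section
/- Let Ω be a finite set with k := |Ω| > 1 and let p = (p_1, p_2, …) be any sequence of probability measures on Ω. Then IT(p)-almost surely, the set of cluster points of the relative-frequency vectors coincides with the set of cluster points of the Cesàro averages of the measures: IT(p)({ω ∈ Ω^ℕ : CP(n ↦ r_n(ω)) = CP(n ↦ (1/n)∑_{i=1}^n p_i)}) = 1. -/
/-!
For each `x : Ω` the indicators `1{ω i = x}` are bounded, have means `p i x`, and are independent
under `μ`, because the cylinder formula makes the coordinates independent. For bounded pairwise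
independent variables the centred partial sums `S n` have variance at most `n C²`, so Chebyshev's
inequality and Borel–Cantelli give `S (k²) / k² → 0` almost surely; as `S` moves by at most `2C`
per step, this extends to `S n / n → 0`. Hence `relFreq ω n - cesaro p n → 0` almost surely, and
two sequences whose difference tends to zero have the same cluster points.
-/

open MeasureTheory Filter Topology

noncomputable section

/-- The set of probability vectors over a finite set `Ω`, i.e. the standard simplex
inside the Euclidean space `ℝ^Ω`. -/
def probVec (Ω : Type*) [Fintype Ω] : Set (EuclideanSpace ℝ Ω) :=
  {p | (∀ x, 0 ≤ p x) ∧ ∑ x, p x = 1}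

/-- The relative-frequency vector of the first `n` terms of `ω`. -/
def relFreq {Ω : Type*} [Fintype Ω] [DecidableEq Ω] (ω : ℕ → Ω) (n : ℕ) :
    EuclideanSpace ℝ Ω :=
  WithLp.toLp 2 fun x => (((Finset.range n).filter fun i => ω i = x).card : ℝ) / n

/-- The set of cluster points of a sequence. -/
def clusterPts {X : Type*} [TopologicalSpace X] (a : ℕ → X) : Set X :=
  {c | MapClusterPt c atTop a}

/-- Cesàro averages of a sequence of vectors. -/
def cesaro {Ω : Type*} [Fintype Ω] (m : ℕ → EuclideanSpace ℝ Ω) (n : ℕ) :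
    EuclideanSpace ℝ Ω :=
  (n : ℝ)⁻¹ • ∑ i ∈ Finset.range n, m i

/-- `μ` is the infinite (Ionescu-Tulcea) independent product of the probability vectors `m i`,
characterized by its values on cylinder sets. -/
def IsIT {Ω : Type*} [Fintype Ω] [MeasurableSpace Ω] (m : ℕ → EuclideanSpace ℝ Ω)
    (μ : Measure (ℕ → Ω)) : Prop :=
  ∀ (n : ℕ) (x : Fin n → Ω),
    μ {ω | ∀ i : Fin n, ω (i : ℕ) = x i} = ∏ i : Fin n, ENNReal.ofReal (m i.val (x i))

end

open ProbabilityTheory Finset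

lemma tendsto_div_of_tendsto_sq_div {u : ℕ → ℝ} {C : ℝ} (hu : ∀ n, |u (n + 1) - u n| ≤ C)
    (hsq : Tendsto (fun k : ℕ => u (k ^ 2) / (k : ℝ) ^ 2) atTop (𝓝 0)) :
    Tendsto (fun n : ℕ => u n / n) atTop (𝓝 0) := by
  have hC : 0 ≤ C := (abs_nonneg _).trans (hu 0)
  have hlip : ∀ m n, m ≤ n → |u n - u m| ≤ C * (n - m) := fun m n hmn => by
    calc |u n - u m| = dist (u m) (u n) := by rw [Real.dist_eq, abs_sub_comm]
      _ ≤ ∑ i ∈ Ico m n, dist (u i) (u (i + 1)) := dist_le_Ico_sum_dist u hmn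
      _ ≤ ∑ _i ∈ Ico m n, C := sum_le_sum fun i _ => by rw [Real.dist_eq, abs_sub_comm]; exact hu i
      _ = C * (n - m) := by rw [sum_const, Nat.card_Ico, nsmul_eq_mul, Nat.cast_sub hmn, mul_comm]
  have hsqrt : Tendsto Nat.sqrt atTop atTop :=
    tendsto_atTop_atTop.2 fun b => ⟨b * b, fun n hn => Nat.le_sqrt.2 hn⟩
  have hmaj : Tendsto (fun k : ℕ => |u (k ^ 2) / (k : ℝ) ^ 2| + 2 * C / k) atTop (𝓝 0) := by
    simpa using hsq.abs.add (tendsto_const_div_atTop_nhds_zero_nat (2 * C))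
  refine squeeze_zero_norm' ?_ (hmaj.comp hsqrt)
  filter_upwards [eventually_ge_atTop 1] with n hn
  set k := Nat.sqrt n
  have hk : (0 : ℝ) < k := by exact_mod_cast Nat.sqrt_pos.2 hn
  have hkn : (k : ℝ) ^ 2 ≤ n := by exact_mod_cast Nat.sqrt_le' n
  have hnk : (n : ℝ) - k ^ 2 ≤ 2 * k := by
    have : n + 1 ≤ (k + 1) ^ 2 := Nat.lt_succ_sqrt' n
    have : (n : ℝ) + 1 ≤ (k + 1) ^ 2 := by exact_mod_cast this
    nlinarith
  have hun : |u n| ≤ |u (k ^ 2)| + C * (2 * k) := by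
    have := hlip (k ^ 2) n (Nat.sqrt_le' n)
    push_cast at this
    have hC2 : C * (n - k ^ 2) ≤ C * (2 * k) := by gcongr
    linarith [abs_sub_abs_le_abs_sub (u n) (u (k ^ 2))]
  calc ‖u n / n‖ = |u n| / n := by rw [Real.norm_eq_abs, abs_div, Nat.abs_cast]
    _ ≤ (|u (k ^ 2)| + C * (2 * k)) / (k : ℝ) ^ 2 := by gcongr
    _ = |u (k ^ 2) / (k : ℝ) ^ 2| + 2 * C / k := by
      rw [abs_div, abs_of_pos (by positivity : (0 : ℝ) < (k : ℝ) ^ 2)]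
      field_simp

lemma MapClusterPt.of_tendsto_dist {ι X : Type*} [PseudoMetricSpace X] {F : Filter ι}
    {a b : ι → X} {c : X} (hc : MapClusterPt c F a)
    (h : Tendsto (fun n => dist (a n) (b n)) F (𝓝 0)) : MapClusterPt c F b := by
  rw [Metric.nhds_basis_ball.mapClusterPt_iff_frequently] at hc ⊢
  intro ε hε
  have hab : ∀ᶠ n in F, dist (a n) (b n) < ε / 2 := (tendsto_order.1 h).2 _ (half_pos hε)
  refine ((hc _ (half_pos hε)).and_eventually hab).mono fun n ⟨han, hn⟩ => ?_
  rw [Metric.mem_ball] at han ⊢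
  linarith [dist_triangle (b n) (a n) c, dist_comm (a n) (b n)]

lemma clusterPts_eq_of_tendsto_dist {X : Type*} [PseudoMetricSpace X] {a b : ℕ → X}
    (h : Tendsto (fun n => dist (a n) (b n)) atTop (𝓝 0)) : clusterPts a = clusterPts b :=
  Set.ext fun _ => ⟨fun hc => hc.of_tendsto_dist h,
    fun hc => hc.of_tendsto_dist (by simpa only [dist_comm] using h)⟩

lemma PiLp.tendsto_nhds_iff {α ι : Type*} {p : ENNReal} {β : ι → Type*}
    [∀ i, TopologicalSpace (β i)] {l : Filter α} {f : α → PiLp p β} {x : PiLp p β} :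
    Tendsto f l (𝓝 x) ↔ ∀ i, Tendsto (fun a => f a i) l (𝓝 (x i)) := by
  rw [(PiLp.homeomorph p β).isInducing.tendsto_nhds_iff, tendsto_pi_nhds]
  rfl

section StrongLaw

variable {α : Type*} [MeasurableSpace α] {μ : Measure α}

lemma ae_tendsto_sub_integral_of_summable_variance [IsFiniteMeasure μ] {Y : ℕ → α → ℝ}
    (hY : ∀ k, MemLp (Y k) 2 μ) (hsum : Summable fun k => Var[Y k; μ]) :
    ∀ᵐ ω ∂μ, Tendsto (fun k => Y k ω - μ[Y k]) atTop (𝓝 0) := by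
  have hBC : ∀ m : ℕ, ∀ᵐ ω ∂μ, ∀ᶠ k in atTop, |Y k ω - μ[Y k]| < 1 / (m + 1) := by
    intro m
    have hε : (0 : ℝ) < 1 / (m + 1) := by positivity
    have hfin : ∑' k, μ {ω | 1 / (m + 1) ≤ |Y k ω - μ[Y k]|} ≠ ⊤ := by
      refine ne_top_of_le_ne_top ?_
        (ENNReal.tsum_le_tsum fun k => meas_ge_le_variance_div_sq (hY k) hε)
      rw [← ENNReal.ofReal_tsum_of_nonneg
        (fun k => div_nonneg (variance_nonneg _ _) (sq_nonneg _)) (hsum.div_const _)]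
      exact ENNReal.ofReal_ne_top
    filter_upwards [ae_eventually_notMem hfin] with ω hω
    simpa only [Set.mem_ofPred_eq, not_le] using hω
  filter_upwards [ae_all_iff.2 hBC] with ω hω
  refine Metric.tendsto_nhds.2 fun ε hε => ?_
  obtain ⟨m, hm⟩ := exists_nat_one_div_lt hε
  filter_upwards [hω m] with k hk
  rw [Real.dist_0_eq_abs]
  exact hk.trans hm

lemma variance_sum_range_le [IsProbabilityMeasure μ] {X : ℕ → α → ℝ} {C : ℝ}
    (hX : ∀ i, AEStronglyMeasurable (X i) μ) (hbound : ∀ i ω, |X i ω| ≤ C)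
    (hindep : Pairwise fun i j => X i ⟂ᵢ[μ] X j) (n : ℕ) :
    Var[∑ i ∈ range n, X i; μ] ≤ n * C ^ 2 := by
  have hbound' : ∀ i, ∀ᵐ ω ∂μ, X i ω ∈ Set.Icc (-C) C := fun i =>
    ae_of_all _ fun ω => abs_le.1 (hbound i ω)
  rw [IndepFun.variance_sum (fun i _ => memLp_of_bounded (hbound' i) (hX i) 2)
    fun i _ j _ hij => hindep hij]
  calc ∑ i ∈ range n, Var[X i; μ] ≤ ∑ _i ∈ range n, ((C - -C) / 2) ^ 2 :=
        sum_le_sum fun i _ => variance_le_sq_of_bounded (hbound' i) (hX i).aemeasurable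
    _ = n * C ^ 2 := by rw [sum_const, card_range, nsmul_eq_mul]; ring

theorem strong_law_ae_of_pairwise_indepFun_of_abs_le [IsProbabilityMeasure μ]
    {X : ℕ → α → ℝ} {C : ℝ} (hX : ∀ i, AEStronglyMeasurable (X i) μ)
    (hbound : ∀ i ω, |X i ω| ≤ C) (hindep : Pairwise fun i j => X i ⟂ᵢ[μ] X j) :
    ∀ᵐ ω ∂μ, Tendsto (fun n : ℕ => (∑ i ∈ range n, (X i ω - μ[X i])) / n) atTop (𝓝 0) := by
  have hmem : ∀ i, MemLp (X i) 2 μ := fun i =>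
    memLp_of_bounded (ae_of_all _ fun ω => abs_le.1 (hbound i ω)) (hX i) 2
  set Y : ℕ → α → ℝ := fun k => ((k : ℝ) ^ 2)⁻¹ • ∑ i ∈ range (k ^ 2), X i with hY
  have hYmem : ∀ k, MemLp (Y k) 2 μ := fun k => (memLp_finsetSum' _ fun i _ => hmem i).const_smul _
  have hYvar : ∀ k : ℕ, Var[Y k; μ] ≤ C ^ 2 * (1 / (k : ℝ) ^ 2) := fun k => by
    rw [hY, variance_smul]
    calc _ ≤ (((k : ℝ) ^ 2)⁻¹) ^ 2 * (((k ^ 2 : ℕ) : ℝ) * C ^ 2) := by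
          gcongr
          exact variance_sum_range_le hX hbound hindep _
      _ = C ^ 2 * (1 / (k : ℝ) ^ 2) := by
        rcases eq_or_ne k 0 with rfl | hk
        · simp
        · push_cast
          field_simp
  have hYsum : Summable fun k => Var[Y k; μ] :=
    ((Real.summable_one_div_nat_pow.2 one_lt_two).mul_left (C ^ 2)).of_nonneg_of_le
      (fun k => variance_nonneg _ _) hYvar
  have hmean : ∀ k : ℕ, μ[Y k] = ((k : ℝ) ^ 2)⁻¹ * ∑ i ∈ range (k ^ 2), μ[X i] := fun k => by
    simp only [hY, Pi.smul_apply, Finset.sum_apply, smul_eq_mul]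
    rw [integral_const_mul, integral_finsetSum _ fun i _ => (hmem i).integrable one_le_two]
  filter_upwards [ae_tendsto_sub_integral_of_summable_variance hYmem hYsum] with ω hω
  refine tendsto_div_of_tendsto_sq_div (C := 2 * C) (fun n => ?_) ?_
  · rw [sum_range_succ, add_sub_cancel_left]
    have : |μ[X n]| ≤ C := by
      simpa using norm_integral_le_of_norm_le_const
        (ae_of_all μ fun ω => (Real.norm_eq_abs (X n ω)).le.trans (hbound n ω))
    linarith [abs_sub (X n ω) μ[X n], hbound n ω]
  · refine hω.congr fun k => ?_
    rw [hmean, hY, sum_sub_distrib]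
    simp only [Pi.smul_apply, Finset.sum_apply, smul_eq_mul]
    ring

end StrongLaw

lemma sum_ofReal_eq_one_of_mem_probVec {Ω : Type*} [Fintype Ω] {q : EuclideanSpace ℝ Ω}
    (hq : q ∈ probVec Ω) : ∑ a, ENNReal.ofReal (q a) = 1 := by
  rw [← ENNReal.ofReal_sum_of_nonneg fun a _ => hq.1 a, hq.2, ENNReal.ofReal_one]

namespace IsIT

variable {Ω : Type*} [Fintype Ω] [MeasurableSpace Ω] {p : ℕ → EuclideanSpace ℝ Ω}
  {μ : Measure (ℕ → Ω)}

lemma isProbabilityMeasure (hμ : IsIT p μ) : IsProbabilityMeasure μ :=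
  ⟨by simpa using hμ 0 Fin.elim0⟩

lemma measure_forall_fin_mem [MeasurableSingletonClass Ω] (hμ : IsIT p μ) (n : ℕ)
    (A : Fin n → Finset Ω) :
    μ {ω | ∀ i : Fin n, ω i ∈ A i} = ∏ i, ∑ a ∈ A i, ENNReal.ofReal (p i a) := by
  have hcyl : ∀ g : Fin n → Ω, MeasurableSet {ω : ℕ → Ω | ∀ i : Fin n, ω i = g i} := fun g => by
    simp only [Set.ofPred_forall]
    exact .iInter fun i => measurable_pi_apply _ (measurableSet_singleton _)
  have hunion : {ω : ℕ → Ω | ∀ i : Fin n, ω i ∈ A i} =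
      ⋃ g ∈ Fintype.piFinset A, {ω | ∀ i : Fin n, ω i = g i} := by
    ext ω
    simp only [Set.mem_ofPred_eq, Set.mem_iUnion, Fintype.mem_piFinset, exists_prop]
    exact ⟨fun h => ⟨fun i => ω i, h, fun _ => rfl⟩, fun ⟨g, hg, he⟩ i => he i ▸ hg i⟩
  have hdisj : (Fintype.piFinset A : Set (Fin n → Ω)).PairwiseDisjoint
      fun g => {ω : ℕ → Ω | ∀ i : Fin n, ω i = g i} := fun g _ g' _ hne =>
    Set.disjoint_left.2 fun ω hω hω' => hne (funext fun i => (hω i).symm.trans (hω' i))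
  rw [hunion, measure_biUnion_finset hdisj fun g _ => hcyl g, prod_univ_sum]
  exact sum_congr rfl fun g _ => hμ n g

lemma measure_forall_mem [MeasurableSingletonClass Ω] (hμ : IsIT p μ)
    (hp : ∀ i, p i ∈ probVec Ω) (S : Finset ℕ) (A : ℕ → Finset Ω) :
    μ {ω | ∀ i ∈ S, ω i ∈ A i} = ∏ i ∈ S, ∑ a ∈ A i, ENNReal.ofReal (p i a) := by
  classical
  obtain ⟨N, hSN⟩ := S.exists_nat_subset_range
  -- `IsIT` only constrains prefixes, so pad with trivial constraints up to length `N`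
  let B : ℕ → Finset Ω := fun i => if i ∈ S then A i else univ
  have hset : {ω : ℕ → Ω | ∀ i ∈ S, ω i ∈ A i} = {ω | ∀ i : Fin N, ω i ∈ B i} := by
    ext ω
    simp only [Set.mem_ofPred_eq, B]
    refine ⟨fun h i => ?_, fun h i hi => ?_⟩
    · split_ifs with hi
      exacts [h i hi, mem_univ _]
    · simpa [hi] using h ⟨i, mem_range.1 (hSN hi)⟩
  rw [hset, hμ.measure_forall_fin_mem N (fun i => B i),
    Fin.prod_univ_eq_prod_range (fun i => ∑ a ∈ B i, ENNReal.ofReal (p i a)),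
    ← prod_subset hSN fun i _ hi => by simp [B, hi, sum_ofReal_eq_one_of_mem_probVec (hp i)]]
  exact prod_congr rfl fun i hi => by simp [B, hi]

lemma iIndepFun_eval [MeasurableSingletonClass Ω] (hμ : IsIT p μ)
    (hp : ∀ i, p i ∈ probVec Ω) : iIndepFun (fun i (ω : ℕ → Ω) => ω i) μ := by
  classical
  refine iIndepFun_iff_measure_inter_preimage_eq_mul.2 fun S B _ => ?_
  have hcoord : ∀ i, μ ((fun ω : ℕ → Ω => ω i) ⁻¹' B i) =
      ∑ a ∈ (B i).toFinset, ENNReal.ofReal (p i a) := fun i =>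
    (by simpa using hμ.measure_forall_mem hp {i} fun j => (B j).toFinset :
      μ {ω | ω i ∈ B i} = _)
  have hinter : ⋂ i ∈ S, (fun ω : ℕ → Ω => ω i) ⁻¹' B i =
      {ω | ∀ i ∈ S, ω i ∈ (B i).toFinset} := by
    ext ω
    simp
  rw [hinter, hμ.measure_forall_mem hp]
  exact prod_congr rfl fun i _ => (hcoord i).symm

lemma measureReal_eval_eq [MeasurableSingletonClass Ω] (hμ : IsIT p μ)
    (hp : ∀ i, p i ∈ probVec Ω) (i : ℕ) (x : Ω) : μ.real {ω | ω i = x} = p i x := by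
  have := hμ.measure_forall_mem hp {i} fun _ => {x}
  simp only [mem_singleton, forall_eq, prod_singleton, sum_singleton] at this
  rw [measureReal_def, this, ENNReal.toReal_ofReal ((hp i).1 x)]

end IsIT

lemma relFreq_sub_cesaro_apply {Ω : Type*} [Fintype Ω] [DecidableEq Ω] (ω : ℕ → Ω)
    (p : ℕ → EuclideanSpace ℝ Ω) (n : ℕ) (x : Ω) :
    (relFreq ω n - cesaro p n) x = (∑ i ∈ range n, ((if ω i = x then 1 else 0) - p i x)) / n := by
  simp [relFreq, cesaro, sum_sub_distrib, sum_boole, div_eq_inv_mul, mul_sub]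

lemma IsIT.ae_tendsto_relFreq_sub_cesaro_apply {Ω : Type*} [Fintype Ω] [DecidableEq Ω]
    [MeasurableSpace Ω] [MeasurableSingletonClass Ω] {p : ℕ → EuclideanSpace ℝ Ω}
    {μ : Measure (ℕ → Ω)} (hμ : IsIT p μ) (hp : ∀ i, p i ∈ probVec Ω) (x : Ω) :
    ∀ᵐ ω ∂μ, Tendsto (fun n => (relFreq ω n - cesaro p n) x) atTop (𝓝 0) := by
  have := hμ.isProbabilityMeasure
  let φ : Ω → ℝ := fun a => if a = x then 1 else 0
  have hφ : Measurable φ := .of_discrete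
  have hmean : ∀ i, ∫ ω, φ (ω i) ∂μ = p i x := fun i => by
    have hmeas : MeasurableSet {ω : ℕ → Ω | ω i = x} :=
      (measurableSet_singleton x).preimage (measurable_pi_apply i)
    rw [← hμ.measureReal_eval_eq hp i x, ← integral_indicator_one hmeas]
    congr with ω
    simp [φ, Set.indicator_apply]
  have hlaw := strong_law_ae_of_pairwise_indepFun_of_abs_le
    (X := fun i (ω : ℕ → Ω) => φ (ω i)) (C := 1)
    (fun i => (hφ.comp (measurable_pi_apply i)).aestronglyMeasurable)
    (fun i ω => by by_cases h : ω i = x <;> simp [φ, h])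
    fun i j hij => ((hμ.iIndepFun_eval hp).indepFun hij).comp hφ hφ
  filter_upwards [hlaw] with ω hω
  simp only [hmean] at hω
  simpa only [relFreq_sub_cesaro_apply] using hω

theorem stmt1_general {Ω : Type*} [Fintype Ω] [DecidableEq Ω] [MeasurableSpace Ω]
    [MeasurableSingletonClass Ω]
    (p : ℕ → EuclideanSpace ℝ Ω) (hp : ∀ i, p i ∈ probVec Ω)
    (μ : Measure (ℕ → Ω)) (hμ : IsIT p μ) :
    μ {ω | clusterPts (relFreq ω) = clusterPts (cesaro p)} = 1 := by
  have := hμ.isProbabilityMeasure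
  have hae : ∀ᵐ ω ∂μ, Tendsto (fun n => relFreq ω n - cesaro p n) atTop (𝓝 0) := by
    filter_upwards [ae_all_iff.2 (hμ.ae_tendsto_relFreq_sub_cesaro_apply hp)] with ω hω
    exact PiLp.tendsto_nhds_iff.2 hω
  have hgood : ∀ᵐ ω ∂μ, ω ∈ {ω | clusterPts (relFreq ω) = clusterPts (cesaro p)} := by
    filter_upwards [hae] with ω hω
    exact clusterPts_eq_of_tendsto_dist (by simpa only [dist_eq_norm, norm_zero] using hω.norm)
  exact (measure_congr (eventuallyEq_univ.2 hgood)).trans measure_univ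

theorem stmt1 {Ω : Type*} [Fintype Ω] [DecidableEq Ω] [MeasurableSpace Ω]
    [MeasurableSingletonClass Ω] (hcard : 1 < Fintype.card Ω)
    (p : ℕ → EuclideanSpace ℝ Ω) (hp : ∀ i, p i ∈ probVec Ω)
    (μ : Measure (ℕ → Ω)) (hμ : IsIT p μ) :
    μ {ω | clusterPts (relFreq ω) = clusterPts (cesaro p)} = 1 :=
  stmt1_general p hp μ hμ
end

section
/- Let Ω be a finite set with k := |Ω| > 1, let ω = (ω_1, ω_2, …) ∈ Ω^ℕ be any sequence, and let ℓ : Ω → ℝ be any function. Then the set of cluster points of the averages of ℓ equals the image of the set of cluster points of the relative frequencies under expectation: CP(n ↦ (1/n)∑_{i=1}^n ℓ(ω_i)) = {E_p[ℓ] : p ∈ CP(n ↦ r_n(ω))}, where E_p[ℓ] = ∑_{x ∈ Ω} ℓ(x)·p({x}). -/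
open MeasureTheory Filter Topology

/-! The average of `ℓ` over the first `n` terms is the continuous linear functional
`p ↦ E_p[ℓ]` evaluated at `r_n(ω)`, so cluster points of `r_n(ω)` map to cluster points of the
averages. Conversely, since the `r_n(ω)` stay in a compact set, a cluster point `y` of the averages
lifts: restrict to the times at which the average is close to `y`, pick a cluster point `p` of
`r_n(ω)` along those times, and continuity plus uniqueness of limits give `E_p[ℓ] = y`. -/

open Finset

theorem MapClusterPt.exists_preimage_of_isCompact {ι X Y : Type*} [TopologicalSpace X]
    [TopologicalSpace Y] [T2Space Y] {l : Filter ι} {u : ι → X} {f : X → Y} {K : Set X}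
    {y : Y} (hK : IsCompact K) (hu : ∀ᶠ i in l, u i ∈ K) (hf : Continuous f)
    (hy : MapClusterPt y l (f ∘ u)) : ∃ x, MapClusterPt x l u ∧ f x = y := by
  set l' := l ⊓ comap (f ∘ u) (𝓝 y)
  have : NeBot l' := neBot_inf_comap_iff_map.2 (by rw [inf_comm]; exact hy)
  have hy' : Tendsto (f ∘ u) l' (𝓝 y) := tendsto_comap.mono_left inf_le_right
  obtain ⟨x, -, hx⟩ :=
    hK.exists_mapClusterPt_of_frequently (hu.filter_mono (inf_le_left : l' ≤ l)).frequently
  refine ⟨x, hx.mono inf_le_left, eq_of_nhds_neBot ?_⟩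
  exact (hx.continuousAt_comp hf.continuousAt).neBot.mono (inf_le_inf_left _ hy')

theorem clusterPts_comp_of_isCompact {X Y : Type*} [TopologicalSpace X] [TopologicalSpace Y]
    [T2Space Y] {a : ℕ → X} {f : X → Y} {K : Set X} (hK : IsCompact K) (ha : ∀ n, a n ∈ K)
    (hf : Continuous f) : clusterPts (f ∘ a) = f '' clusterPts a := by
  ext y
  constructor
  · intro hy
    exact hy.exists_preimage_of_isCompact hK (Eventually.of_forall ha) hf
  · rintro ⟨x, hx, rfl⟩
    exact hx.continuousAt_comp hf.continuousAt

section relFreq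

variable {Ω : Type*} [Fintype Ω] [DecidableEq Ω] (ω : ℕ → Ω)

theorem relFreq_apply_mem_Icc (n : ℕ) (x : Ω) : relFreq ω n x ∈ Set.Icc 0 1 := by
  refine ⟨by unfold relFreq; positivity, div_le_one_of_le₀ ?_ n.cast_nonneg⟩
  exact Nat.cast_le.2 ((card_filter_le _ _).trans_eq (card_range n))

theorem exists_isCompact_forall_relFreq_mem :
    ∃ K : Set (EuclideanSpace ℝ Ω), IsCompact K ∧ ∀ n, relFreq ω n ∈ K :=
  ⟨WithLp.toLp 2 '' Set.univ.pi fun _ => Set.Icc 0 1,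
    (isCompact_univ_pi fun _ => isCompact_Icc).image (PiLp.continuous_toLp 2 _),
    fun n => ⟨_, fun x _ => relFreq_apply_mem_Icc ω n x, rfl⟩⟩

theorem average_eq_sum_mul_relFreq (ℓ : Ω → ℝ) (n : ℕ) :
    (n : ℝ)⁻¹ * ∑ i ∈ range n, ℓ (ω i) = ∑ x, ℓ x * relFreq ω n x := by
  rw [← sum_fiberwise (range n) ω, mul_sum]
  refine sum_congr rfl fun x _ => ?_
  rw [sum_congr rfl fun i hi => congrArg ℓ (mem_filter.1 hi).2, sum_const, nsmul_eq_mul]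
  simp only [relFreq, PiLp.toLp_apply]
  ring

end relFreq

theorem stmt5_general {Ω : Type*} [Fintype Ω] [DecidableEq Ω]
    (ω : ℕ → Ω) (ℓ : Ω → ℝ) :
    clusterPts (fun n => (n : ℝ)⁻¹ * ∑ i ∈ Finset.range n, ℓ (ω i)) =
      (fun p : EuclideanSpace ℝ Ω => ∑ x, ℓ x * p x) '' clusterPts (relFreq ω) := by
  obtain ⟨K, hK, hmem⟩ := exists_isCompact_forall_relFreq_mem ω
  rw [← clusterPts_comp_of_isCompact hK hmem (by fun_prop)]
  simp only [Function.comp_def, average_eq_sum_mul_relFreq]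

/-- The cluster points of the averages of a gamble `ℓ` along a data sequence
are exactly the expectations of `ℓ` under the cluster points of the relative frequencies. -/
theorem stmt5 {Ω : Type*} [Fintype Ω] [DecidableEq Ω] (hcard : 1 < Fintype.card Ω)
    (ω : ℕ → Ω) (ℓ : Ω → ℝ) :
    clusterPts (fun n => (n : ℝ)⁻¹ * ∑ i ∈ Finset.range n, ℓ (ω i)) =
      (fun p : EuclideanSpace ℝ Ω => ∑ x, ℓ x * p x) '' clusterPts (relFreq ω) :=
  stmt5_general ω ℓ
end

section
/- Let k > 1 and let M ⊆ Δ^k be nonempty. Let p be an element of the convex hull of M, let a = (a_1, …, a_u) ∈ (Δ^k)^u with q := r(a) satisfying ‖q − p‖ < δ, and suppose δ > 0 is such that there exists v ∈ ℕ, v ≥ 1, with 2v/(u+v) ≤ δ and 4(k+1)/v ≤ δ. Then there exist b_1, …, b_v ∈ M such that ‖r(a ⌢ (b_1, …, b_v)) − p‖ < δ, and moreover ‖r(a ⌢ (b_1, …, b_i)) − p‖ < 2δ for all 0 ≤ i ≤ v. -/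
open MeasureTheory Filter Topology

open Finset

/-! By Carathéodory, `p` is a convex combination `∑ wᵢ zᵢ` of at most `k + 1` points of `M`.
Taking `⌊v wᵢ⌋` copies of each `zᵢ` and padding with a fixed point `d ∈ M` yields `v` points whose
sum differs from `v • p` by `∑ (⌊v wᵢ⌋ - v wᵢ) • (zᵢ - d)`, of norm at most `2 (k + 1)`, since
points of the simplex are at distance at most `2`. As `u q` is within `u δ` of `u • p`, the new
average is within `δ` of `p` once `4 (k + 1) ≤ v δ`; along the way each appended point moves the
sum by at most `2` away from the multiple of `p`, which `2 v / (u + v) ≤ δ` absorbs. -/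

theorem convex_probVec (Ω : Type*) [Fintype Ω] : Convex ℝ (probVec Ω) := by
  intro x hx y hy α β hα hβ hαβ
  refine ⟨fun i => by
    simpa using add_nonneg (mul_nonneg hα (hx.1 i)) (mul_nonneg hβ (hy.1 i)), ?_⟩
  simp only [PiLp.add_apply, PiLp.smul_apply, smul_eq_mul]
  rw [sum_add_distrib, ← mul_sum, ← mul_sum, hx.2, hy.2, mul_one, mul_one, hαβ]

theorem norm_le_one_of_mem_probVec {Ω : Type*} [Fintype Ω] {x : EuclideanSpace ℝ Ω}
    (hx : x ∈ probVec Ω) : ‖x‖ ≤ 1 := by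
  rw [EuclideanSpace.norm_eq, Real.sqrt_le_one]
  calc ∑ i, ‖x i‖ ^ 2 = ∑ i, x i ^ 2 := by simp only [Real.norm_eq_abs, sq_abs]
    _ ≤ (∑ i, x i) ^ 2 := sum_sq_le_sq_sum_of_nonneg fun i _ => hx.1 i
    _ = 1 := by rw [hx.2, one_pow]

theorem norm_sub_le_two_of_mem_probVec {Ω : Type*} [Fintype Ω] {x y : EuclideanSpace ℝ Ω}
    (hx : x ∈ probVec Ω) (hy : y ∈ probVec Ω) : ‖x - y‖ ≤ 2 := by
  linarith [norm_sub_le x y, norm_le_one_of_mem_probVec hx, norm_le_one_of_mem_probVec hy]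

theorem List.sum_range_getD {M : Type*} [AddCommMonoid M] (L : List M) (d : M) {n : ℕ}
    (h : L.length ≤ n) :
    ∑ j ∈ Finset.range n, L.getD j d = L.sum + (n - L.length) • d := by
  induction L generalizing n with
  | nil => simp
  | cons x L ih =>
    obtain ⟨m, rfl⟩ : ∃ m, n = m + 1 := Nat.exists_eq_add_one.2 (by simp at h; omega)
    simp only [Finset.sum_range_succ', List.getD_cons_succ, List.length_cons, Nat.add_sub_add_right]
    rw [ih (by simpa using h)]
    simp [add_comm, add_left_comm]

theorem List.getD_mem_or_eq {α : Type*} (L : List α) (d : α) (j : ℕ) :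
    L.getD j d ∈ L ∨ L.getD j d = d := by
  by_cases h : j < L.length
  · exact .inl (L.getD_eq_getElem d h ▸ L.getElem_mem h)
  · exact .inr (L.getD_eq_default d (not_lt.1 h))

section NormedSpace

variable {E : Type*} [NormedAddCommGroup E] [NormedSpace ℝ E]

theorem exists_seq_norm_sum_sub_smul_le {ι : Type*} [Fintype ι] (z : ι → E) {w : ι → ℝ}
    (hw0 : ∀ i, 0 ≤ w i) (hw1 : ∑ i, w i = 1) (d : E) {D : ℝ} (hD : ∀ i, ‖z i - d‖ ≤ D)
    (v : ℕ) :
    ∃ b : ℕ → E, (∀ j, b j ∈ insert d (Set.range z)) ∧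
      ‖∑ j ∈ range v, b j - (v : ℝ) • ∑ i, w i • z i‖ ≤ Fintype.card ι * D := by
  set n : ι → ℕ := fun i => ⌊v * w i⌋₊
  have hn_le (i : ι) : (n i : ℝ) ≤ v * w i := Nat.floor_le (by positivity [hw0 i])
  have hn_gt (i : ι) : v * w i < n i + 1 := Nat.lt_floor_add_one _
  have hsum_n : ∑ i, n i ≤ v := by
    have : ∑ i, (n i : ℝ) ≤ v := calc
      ∑ i, (n i : ℝ) ≤ ∑ i, v * w i := sum_le_sum fun i _ => hn_le i
      _ = v := by rw [← mul_sum, hw1, mul_one]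
    exact_mod_cast this
  set L := (univ : Finset ι).toList.flatMap fun i => List.replicate (n i) (z i)
  have hL_sum : L.sum = ∑ i, n i • z i := by simp [L, List.flatMap, List.sum_flatten]
  have hL_length : L.length = ∑ i, n i := by simp [L, List.flatMap]
  refine ⟨fun j => L.getD j d, fun j => ?_, ?_⟩
  · rcases L.getD_mem_or_eq d j with h | h
    · obtain ⟨i, -, hi⟩ := List.mem_flatMap.1 h
      exact .inr ⟨i, (List.eq_of_mem_replicate hi).symm⟩
    · exact .inl h
  have herr : ∑ j ∈ range v, L.getD j d - (v : ℝ) • ∑ i, w i • z i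
      = ∑ i, ((n i : ℝ) - v * w i) • (z i - d) := by
    rw [L.sum_range_getD d (hL_length ▸ hsum_n), hL_sum, hL_length]
    have hpad : (v - ∑ i, n i) • d = ((v : ℝ) - (∑ i, n i : ℕ)) • d := by
      rw [← Nat.cast_smul_eq_nsmul ℝ, Nat.cast_sub hsum_n]
    simp only [hpad, sub_smul, smul_sub, sum_sub_distrib, ← sum_smul, mul_smul, ← smul_sum,
      Nat.cast_smul_eq_nsmul, hw1, one_smul]
    abel
  rw [herr]
  calc ‖∑ i, ((n i : ℝ) - v * w i) • (z i - d)‖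
      ≤ ∑ i, ‖((n i : ℝ) - v * w i) • (z i - d)‖ := norm_sum_le _ _
    _ ≤ ∑ _i : ι, D := sum_le_sum fun i _ => by
        rw [norm_smul, Real.norm_eq_abs]
        have : |(n i : ℝ) - v * w i| ≤ 1 := abs_le.2 ⟨by linarith [hn_gt i], by linarith [hn_le i]⟩
        simpa using mul_le_mul this (hD i) (norm_nonneg _) zero_le_one
    _ = Fintype.card ι * D := by rw [sum_const, card_univ, nsmul_eq_mul]

theorem exists_seq_mem_norm_sum_sub_smul_le [FiniteDimensional ℝ E] {M : Set E} {D : ℝ}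
    (hD : ∀ x ∈ M, ∀ y ∈ M, ‖x - y‖ ≤ D) {p : E} (hp : p ∈ convexHull ℝ M) (v : ℕ) :
    ∃ b : ℕ → E, (∀ j, b j ∈ M) ∧
      ‖∑ j ∈ range v, b j - (v : ℝ) • p‖ ≤ (Module.finrank ℝ E + 1) * D := by
  obtain ⟨ι, _, z, w, hzM, hz_indep, hw0, hw1, rfl⟩ := eq_pos_convex_span_of_mem_convexHull hp
  obtain ⟨d, hd⟩ := convexHull_nonempty_iff.1 ⟨_, hp⟩
  obtain ⟨b, hb, hb_err⟩ := exists_seq_norm_sum_sub_smul_le z (fun i => (hw0 i).le) hw1 d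
    (fun i => hD _ (hzM ⟨i, rfl⟩) _ hd) v
  refine ⟨b, fun j => Set.insert_subset hd hzM (hb j), hb_err.trans ?_⟩
  have hcard : Fintype.card ι ≤ Module.finrank ℝ E + 1 :=
    hz_indep.card_le_finrank_succ.trans (Nat.succ_le_succ (Submodule.finrank_le _))
  exact mul_le_mul_of_nonneg_right (by exact_mod_cast hcard) ((norm_nonneg _).trans (hD d hd d hd))

theorem norm_sum_range_sub_smul_le {b : ℕ → E} {p : E} {D : ℝ} {n : ℕ}
    (hb : ∀ j < n, ‖b j - p‖ ≤ D) :
    ‖∑ j ∈ range n, b j - (n : ℝ) • p‖ ≤ n * D := by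
  have : ∑ j ∈ range n, b j - (n : ℝ) • p = ∑ j ∈ range n, (b j - p) := by
    rw [sum_sub_distrib, sum_const, card_range, Nat.cast_smul_eq_nsmul]
  rw [this]
  refine (norm_sum_le _ _).trans ?_
  simpa using sum_le_sum fun j hj => hb j (mem_range.1 hj)

theorem norm_inv_smul_add_sub_le {u i : ℝ} (hu : 0 < u) (hi : 0 ≤ i) (A B p : E) :
    ‖(u + i)⁻¹ • (A + B) - p‖ ≤ (u * ‖u⁻¹ • A - p‖ + ‖B - i • p‖) / (u + i) := by
  have hui : 0 < u + i := by positivity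
  have : (u + i)⁻¹ • (A + B) - p = (u + i)⁻¹ • (u • (u⁻¹ • A - p) + (B - i • p)) := by
    match_scalars <;> field_simp; ring
  rw [this, norm_smul, norm_inv, Real.norm_of_nonneg hui.le, inv_mul_eq_div]
  gcongr
  refine (norm_add_le _ _).trans_eq ?_
  rw [norm_smul, Real.norm_of_nonneg hu.le]

end NormedSpace

theorem stmt19_general (k : ℕ)
    (M : Set (EuclideanSpace ℝ (Fin k))) (hMsub : M ⊆ probVec (Fin k))
    (p : EuclideanSpace ℝ (Fin k)) (hp : p ∈ convexHull ℝ M)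
    (u : ℕ) (hu : 1 ≤ u) (a : ℕ → EuclideanSpace ℝ (Fin k))
    (δ : ℝ)
    (hqp : ‖(u : ℝ)⁻¹ • ∑ j ∈ Finset.range u, a j - p‖ < δ)
    (v : ℕ) (hv : 1 ≤ v)
    (hv1 : 2 * (v : ℝ) / ((u : ℝ) + (v : ℝ)) ≤ δ)
    (hv2 : 4 * ((k : ℝ) + 1) / (v : ℝ) ≤ δ) :
    ∃ b : ℕ → EuclideanSpace ℝ (Fin k), (∀ j < v, b j ∈ M) ∧
      ‖((u : ℝ) + (v : ℝ))⁻¹ •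
          (∑ j ∈ Finset.range u, a j + ∑ j ∈ Finset.range v, b j) - p‖ < δ ∧
      ∀ i : ℕ, i ≤ v →
        ‖((u : ℝ) + (i : ℝ))⁻¹ •
            (∑ j ∈ Finset.range u, a j + ∑ j ∈ Finset.range i, b j) - p‖ < 2 * δ := by
  have hp_mem : p ∈ probVec (Fin k) := convexHull_min hMsub (convex_probVec _) hp
  have hu0 : (0 : ℝ) < u := by exact_mod_cast hu
  have hv0 : (0 : ℝ) < v := by exact_mod_cast hv
  have hqp' := mul_lt_mul_of_pos_left hqp hu0
  obtain ⟨b, hbM, hb_err⟩ := exists_seq_mem_norm_sum_sub_smul_le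
    (fun x hx y hy => norm_sub_le_two_of_mem_probVec (hMsub hx) (hMsub hy)) hp v
  rw [finrank_euclideanSpace_fin] at hb_err
  refine ⟨b, fun j _ => hbM j, ?_, fun i hi => ?_⟩
  · refine (norm_inv_smul_add_sub_le hu0 hv0.le _ _ _).trans_lt ?_
    rw [div_lt_iff₀ (by positivity)]
    rw [div_le_iff₀ hv0] at hv2
    linarith
  · have hi' : (i : ℝ) ≤ v := by exact_mod_cast hi
    have hbi := norm_sum_range_sub_smul_le (n := i) fun j _ =>
      norm_sub_le_two_of_mem_probVec (hMsub (hbM j)) hp_mem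
    refine (norm_inv_smul_add_sub_le hu0 (Nat.cast_nonneg i) _ _ _).trans_lt ?_
    rw [div_lt_iff₀ (by positivity)]
    rw [div_le_iff₀ (by positivity)] at hv1
    nlinarith

/-- **"Stay and grow" lemma.** If the current average `q = r(a)` of `u` simplex
points is within `δ` of `p ∈ conv(M)`, and `v` satisfies `2v/(u+v) ≤ δ` and `4(k+1)/v ≤ δ`,
then one can append `v` points of `M` so that the new average is again within `δ` of `p`,
never straying more than `2δ` from `p` along the way. -/
theorem stmt19 (k : ℕ) (hk : 1 < k)
    (M : Set (EuclideanSpace ℝ (Fin k))) (hM : M.Nonempty) (hMsub : M ⊆ probVec (Fin k))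
    (p : EuclideanSpace ℝ (Fin k)) (hp : p ∈ convexHull ℝ M)
    (u : ℕ) (hu : 1 ≤ u) (a : ℕ → EuclideanSpace ℝ (Fin k))
    (ha : ∀ j < u, a j ∈ probVec (Fin k))
    (δ : ℝ) (hδ : 0 < δ)
    (hqp : ‖(u : ℝ)⁻¹ • ∑ j ∈ Finset.range u, a j - p‖ < δ)
    (v : ℕ) (hv : 1 ≤ v)
    (hv1 : 2 * (v : ℝ) / ((u : ℝ) + (v : ℝ)) ≤ δ)
    (hv2 : 4 * ((k : ℝ) + 1) / (v : ℝ) ≤ δ) :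
    ∃ b : ℕ → EuclideanSpace ℝ (Fin k), (∀ j < v, b j ∈ M) ∧
      ‖((u : ℝ) + (v : ℝ))⁻¹ •
          (∑ j ∈ Finset.range u, a j + ∑ j ∈ Finset.range v, b j) - p‖ < δ ∧
      ∀ i : ℕ, i ≤ v →
        ‖((u : ℝ) + (i : ℝ))⁻¹ •
            (∑ j ∈ Finset.range u, a j + ∑ j ∈ Finset.range i, b j) - p‖ < 2 * δ :=
  stmt19_general k M hMsub p hp u hu a δ hqp v hv hv1 hv2
end
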